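/- Fix n, k, d ∈ ℕ, let N = n·k + d, and let N' = 2^⌈log₂ N⌉, padding the working list with dummy entries (M₀, 0) to length N'. Implement both sorting steps of the Advanced algorithm by Batcher's bitonic sorting network on N' positions, each compare-exchange emitting a read and a write at each of its two positions, and implement the folding step by a linear scan that, for t = 1, …, N'−1, reads position t and writes position t−1, and finally writes position N'−1. Then the complete trace of the Advanced algorithm—the accesses of the first sorting network, then of the folding scan, then of the second sorting network, then reads of positions 0, …, d−1—is a fixed list determined by (n, k, d) alone, identical for all inputs of these dimensions; hence the Advanced algorithm is fully (0-statistically) oblivious. -/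

import Mathlib

/-- The array tags: `G` is (also) used for the working list of the Advanced
algorithm, `Gstar` for the aggregated output. -/
inductive Tag : Type
  | G
  | Gstar
deriving DecidableEq

/-- A memory operation: read or write. -/
inductive Op : Type
  | read
  | write
deriving DecidableEq

/-- A memory access: a cell (array tag together with a position) and an operation. -/
abbrev Access : Type := (Tag × ℕ) × Op

/-- A trace (memory access pattern) is a finite list of memory accesses. -/
abbrev Trace : Type := List Access

/-- A weight: a pair (index, value). -/
abbrev Entry : Type := ℕ × ℝ

/-- The compare-exchange operations of Batcher's bitonic sorting network on
`2^m` positions: for stage `k = 1, …, m` and `j = k−1` down to `0`, for every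
`i ∈ {0, …, 2^m − 1}` whose `j`-th binary bit is `0`, compare-exchange
positions `i` and `i + 2^j`, ascending iff the `k`-th binary bit of `i` is
`0`.  Each element is `(i, i + 2^j, ascending?)`. -/
def bitonicPairs (m : ℕ) : List (ℕ × ℕ × Bool) :=
  (List.range m).flatMap fun k' =>
    let k := k' + 1
    ((List.range k).reverse).flatMap fun j =>
      ((List.range (2 ^ m)).filter fun i => !i.testBit j).map fun i =>
        (i, i + 2 ^ j, !i.testBit k)

/-- One compare-exchange (sorting entries by index), emitting a read and a
write at each of its two positions. -/
def cexStep (s : List Entry × Trace) (op : ℕ × ℕ × Bool) : List Entry × Trace :=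
  let i := op.1
  let i2 := op.2.1
  let asc := op.2.2
  let a := s.1.getD i ((0 : ℕ), (0 : ℝ))
  let b := s.1.getD i2 ((0 : ℕ), (0 : ℝ))
  let ok : Bool := if asc then decide (a.1 ≤ b.1) else decide (b.1 ≤ a.1)
  ((if ok then s.1 else (s.1.set i b).set i2 a),
   s.2 ++ [((Tag.G, i), Op.read), ((Tag.G, i2), Op.read),
           ((Tag.G, i), Op.write), ((Tag.G, i2), Op.write)])

/-- Running Batcher's bitonic sorting network on `2^m` positions. -/
def networkRun (m : ℕ) (s : List Entry × Trace) : List Entry × Trace :=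
  List.foldl cexStep s (bitonicPairs m)

/-- One step of the oblivious folding scan at position `t` (with `t ≥ 1`):
read position `t`, write position `t − 1`. -/
def foldStep (M0 : ℕ) (s : (List Entry × Entry) × Trace) (t : ℕ) :
    (List Entry × Entry) × Trace :=
  let l := s.1.1
  let acc := s.1.2
  let cur := l.getD t ((0 : ℕ), (0 : ℝ))
  let out : Entry × Entry :=
    if cur.1 = acc.1 then ((M0, (0 : ℝ)), (acc.1, acc.2 + cur.2)) else (acc, cur)
  ((l.set (t - 1) out.1, out.2),
   s.2 ++ [((Tag.G, t), Op.read), ((Tag.G, t - 1), Op.write)])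

/-- The oblivious folding implemented as a linear scan over an array of length
`Np`: for `t = 1, …, Np − 1` read position `t` and write position `t − 1`,
finally write position `Np − 1`. -/
def foldRun (M0 Np : ℕ) (s : List Entry × Trace) : List Entry × Trace :=
  let init : (List Entry × Entry) × Trace :=
    ((s.1, s.1.getD 0 ((0 : ℕ), (0 : ℝ))), s.2)
  let r := List.foldl (foldStep M0) init ((List.range (Np - 1)).map (· + 1))
  (r.1.1.set (Np - 1) r.1.2, r.2 ++ [((Tag.G, Np - 1), Op.write)])

/-- The Advanced aggregation algorithm with model dimension `d` and dummy index
`M0`, on an input list `g` of `n·k` gradient entries: append the `d`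
zero-valued entries, pad with dummy entries `(M0, 0)` to length
`N' = 2^⌈log₂ (n·k + d)⌉`, sort with the bitonic network, obliviously fold,
sort again, and finally read the first `d` positions. -/
def advancedRun (n k d M0 : ℕ) (g : List Entry) : List Entry × Trace :=
  let N := n * k + d
  let m := Nat.clog 2 N
  let Np := 2 ^ m
  let g1 := g ++ (List.range d).map fun j => ((j : ℕ), (0 : ℝ))
  let padded := g1 ++ List.replicate (Np - N) ((M0 : ℕ), (0 : ℝ))
  let s1 := networkRun m (padded, ([] : Trace))
  let s2 := foldRun M0 Np s1
  let s3 := networkRun m s2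
  (s3.1, s3.2 ++ (List.range d).map fun j => (((Tag.G, j) : Tag × ℕ), Op.read))

/-- The accesses of one run of the bitonic sorting network on `2^m` positions:
a read and a write at each of the two positions of every compare-exchange. -/
def networkTrace (m : ℕ) : Trace :=
  (bitonicPairs m).flatMap fun op =>
    [((Tag.G, op.1), Op.read), ((Tag.G, op.2.1), Op.read),
     ((Tag.G, op.1), Op.write), ((Tag.G, op.2.1), Op.write)]

/-- The accesses of the oblivious folding scan on an array of length `Np`. -/
def foldTrace (Np : ℕ) : Trace :=
  ((List.range (Np - 1)).flatMap fun t' =>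
    [((Tag.G, t' + 1), Op.read), ((Tag.G, t'), Op.write)]) ++
    [((Tag.G, Np - 1), Op.write)]

/-- The fixed complete trace of the Advanced algorithm, determined by
`(n, k, d)` alone: first sorting network, then folding scan, then second
sorting network, then reads of positions `0, …, d − 1`. -/
def fixedAdvancedTrace (n k d : ℕ) : Trace :=
  let N := n * k + d
  let m := Nat.clog 2 N
  let Np := 2 ^ m
  networkTrace m ++ foldTrace Np ++ networkTrace m ++
    (List.range d).map fun j => (((Tag.G, j) : Tag × ℕ), Op.read)

/-! Every phase is a left fold over a data-independent schedule (the comparator list, the scan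
positions) whose steps append accesses determined by the schedule entry alone, never by the
entries compared or merged; so the trace is the concatenation of the schedules' accesses. -/

theorem snd_foldl_eq_append_flatMap {σ α β : Type*} (f : σ × List β → α → σ × List β)
    (out : α → List β) (hf : ∀ s a, (f s a).2 = s.2 ++ out a) :
    ∀ (as : List α) (s : σ × List β), (as.foldl f s).2 = s.2 ++ as.flatMap out
  | [], s => by simp
  | a :: as, s => by
    rw [List.foldl_cons, snd_foldl_eq_append_flatMap f out hf as, hf, List.flatMap_cons,
      List.append_assoc]

theorem networkRun_snd (m : ℕ) (s : List Entry × Trace) :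
    (networkRun m s).2 = s.2 ++ networkTrace m :=
  snd_foldl_eq_append_flatMap cexStep _ (fun _ _ => rfl) _ s

theorem foldRun_snd (M0 Np : ℕ) (s : List Entry × Trace) :
    (foldRun M0 Np s).2 = s.2 ++ foldTrace Np := by
  simp only [foldRun, foldTrace,
    snd_foldl_eq_append_flatMap (foldStep M0) _ (fun _ _ => rfl), List.flatMap_map,
    Nat.add_sub_cancel, List.append_assoc]

theorem advancedRun_snd (n k d M0 : ℕ) (g : List Entry) :
    (advancedRun n k d M0 g).2 = fixedAdvancedTrace n k d := by
  simp only [advancedRun, fixedAdvancedTrace, networkRun_snd, foldRun_snd, List.nil_append,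
    List.append_assoc]

theorem advanced_fully_oblivious_general (n k d M0 : ℕ)
    (g g' : List Entry) :
    (advancedRun n k d M0 g).2 = (advancedRun n k d M0 g').2 ∧
      (advancedRun n k d M0 g).2 = fixedAdvancedTrace n k d :=
  ⟨(advancedRun_snd n k d M0 g).trans (advancedRun_snd n k d M0 g').symm,
    advancedRun_snd n k d M0 g⟩

/-- The Advanced algorithm is fully (0-statistically) oblivious: for all inputs
of `n·k` gradient entries, its complete trace is the same fixed list,
determined by `(n, k, d)` alone. -/
theorem advanced_fully_oblivious (n k d M0 : ℕ) (hM0 : d ≤ M0)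
    (g g' : List Entry) (hg : g.length = n * k) (hg' : g'.length = n * k) :
    (advancedRun n k d M0 g).2 = (advancedRun n k d M0 g').2 ∧
      (advancedRun n k d M0 g).2 = fixedAdvancedTrace n k d :=
  advanced_fully_oblivious_general n k d M0 g g'
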